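/- Fix an integer d ≥ 7 and let (Ŷ_i)_{i≥1} be i.i.d. nonnegative-integer random variables satisfying, for all j ≥ 1 and all 1 ≤ q ≤ d: P(Ŷ_1 = j) ≤ j^{−2}·d^{−1000} and P(∑_{i=1}^{q} Ŷ_i = j) ≤ 2·q·j^{−2}·d^{−1000}. Let Î_q = #{1 ≤ i ≤ q : Ŷ_i ≥ 1}. Then for every 1 ≤ q ≤ d and every integer j ≥ 2, P(Î_q ≥ 2 and ∑_{i=1}^{q} Ŷ_i = j) ≤ 8·q²·j^{−2}·d^{−2000}. -/

import Mathlib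

open MeasureTheory ProbabilityTheory

lemma sum_inv_sq_aux (M : ℕ) :
    ∑ n ∈ Finset.Ico 1 (M + 1), (((n:ℝ))^2)⁻¹ ≤ 2 - 2 / (M + 1) := by
  induction M with
  | zero => simp
  | succ M ih =>
    rw [Finset.sum_Ico_succ_top (by omega)]
    have hM1 : (0:ℝ) < (M:ℝ) + 1 := by positivity
    have hM2 : (0:ℝ) < (M:ℝ) + 2 := by positivity
    have key : (((M:ℝ) + 1)^2)⁻¹ ≤ 2 / ((M:ℝ) + 1) - 2 / ((M:ℝ) + 2) := by
      have heq : 2 / ((M:ℝ) + 1) - 2 / ((M:ℝ) + 2) = 2 / (((M:ℝ) + 1) * ((M:ℝ) + 2)) := by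
        field_simp
        ring
      rw [heq, inv_eq_one_div, div_le_div_iff₀ (by positivity) (by positivity)]
      nlinarith
    push_cast
    push_cast at ih
    rw [show ((M:ℝ) + 1 + 1) = (M:ℝ) + 2 by ring]
    linarith

lemma sum_inv_sq_le (N : ℕ) : ∑ n ∈ Finset.Ico 1 N, (((n:ℝ))^2)⁻¹ ≤ 2 := by
  cases N with
  | zero => simp
  | succ M =>
    refine (sum_inv_sq_aux M).trans ?_
    have : (0:ℝ) ≤ 2 / ((M:ℝ) + 1) := by positivity
    linarith

lemma term_bound {a b : ℝ} (ha : 0 < a) (hb : 0 < b) :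
    (a^2)⁻¹ * (b^2)⁻¹ ≤ ((a+b)^2)⁻¹ * (2*((a^2)⁻¹+(b^2)⁻¹)) := by
  have h : ((a+b)^2)⁻¹ * (2*((a^2)⁻¹+(b^2)⁻¹)) - (a^2)⁻¹ * (b^2)⁻¹
      = (a-b)^2 / ((a+b)^2 * a^2 * b^2) := by
    field_simp
    ring
  nlinarith [div_nonneg (sq_nonneg (a - b)) (by positivity : (0:ℝ) ≤ (a+b)^2 * a^2 * b^2)]

lemma refl_sum (j : ℕ) :
    ∑ j' ∈ Finset.Ico 1 j, ((((j - j' : ℕ):ℝ))^2)⁻¹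
      = ∑ j' ∈ Finset.Ico 1 j, (((j':ℝ))^2)⁻¹ := by
  refine Finset.sum_nbij' (fun j' => j - j') (fun j' => j - j') ?_ ?_ ?_ ?_ ?_
  · intro a ha
    simp only [Finset.mem_Ico] at ha ⊢
    omega
  · intro a ha
    simp only [Finset.mem_Ico] at ha ⊢
    omega
  · intro a ha
    simp only [Finset.mem_Ico] at ha
    omega
  · intro a ha
    simp only [Finset.mem_Ico] at ha
    omega
  · intro a ha
    dsimp only

lemma conv_sum_le (j : ℕ) (hj : 1 ≤ j) :
    ∑ j' ∈ Finset.Ico 1 j, (((j':ℝ))^2)⁻¹ * ((((j - j' : ℕ):ℝ))^2)⁻¹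
      ≤ 8 * (((j:ℝ))^2)⁻¹ := by
  have hstep : ∑ j' ∈ Finset.Ico 1 j, (((j':ℝ))^2)⁻¹ * ((((j - j' : ℕ):ℝ))^2)⁻¹
      ≤ ∑ j' ∈ Finset.Ico 1 j,
          (((j:ℝ))^2)⁻¹ * (2*((((j':ℝ))^2)⁻¹ + ((((j - j' : ℕ):ℝ))^2)⁻¹)) := by
    refine Finset.sum_le_sum ?_
    intro j' hj'
    simp only [Finset.mem_Ico] at hj'
    have ha : (0:ℝ) < (j':ℝ) := by exact_mod_cast hj'.1
    have hb : (0:ℝ) < ((j - j' : ℕ):ℝ) := by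
      have : 1 ≤ j - j' := by omega
      exact_mod_cast this
    have hab : (j':ℝ) + ((j - j' : ℕ):ℝ) = (j:ℝ) := by
      have : j' + (j - j') = j := by omega
      exact_mod_cast this
    have := term_bound ha hb
    rwa [hab] at this
  refine hstep.trans ?_
  rw [← Finset.mul_sum]
  have hsum : ∑ j' ∈ Finset.Ico 1 j,
      (2*((((j':ℝ))^2)⁻¹ + ((((j - j' : ℕ):ℝ))^2)⁻¹)) ≤ 8 := by
    rw [← Finset.mul_sum, Finset.sum_add_distrib, refl_sum]
    have := sum_inv_sq_le j
    linarith
  have hj2 : (0:ℝ) ≤ (((j:ℝ))^2)⁻¹ := by positivity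
  calc (((j:ℝ))^2)⁻¹ * ∑ j' ∈ Finset.Ico 1 j,
        (2*((((j':ℝ))^2)⁻¹ + ((((j - j' : ℕ):ℝ))^2)⁻¹))
      ≤ (((j:ℝ))^2)⁻¹ * 8 := by exact mul_le_mul_of_nonneg_left hsum hj2
    _ = 8 * (((j:ℝ))^2)⁻¹ := by ring

/-- Let `(Ŷ_i)` be i.i.d. nonnegative-integer random variables with, for all `j ≥ 1`,
`P(Ŷ_i = j) ≤ j⁻² d^{-1000}` and, for all `1 ≤ q ≤ d`,
`P(∑_{i<q} Ŷ_i = j) ≤ 2 q j⁻² d^{-1000}`. Let `Î_q = #{i < q : Ŷ_i ≥ 1}`. Then for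
every `1 ≤ q ≤ d` and every `j ≥ 2`,
`P(Î_q ≥ 2 and ∑_{i<q} Ŷ_i = j) ≤ 8 q² j⁻² d^{-2000}`. -/
theorem stmt_15 {Ω : Type*} [MeasurableSpace Ω] (μ : Measure Ω) [IsProbabilityMeasure μ]
    (d : ℕ) (hd : 7 ≤ d)
    (Yh : ℕ → Ω → ℕ) (hmeas : ∀ i, Measurable (Yh i))
    (hindep : iIndepFun Yh μ)
    (hident : ∀ i, IdentDistrib (Yh i) (Yh 0) μ μ)
    (hone : ∀ i, ∀ j, 1 ≤ j →
      μ {ω | Yh i ω = j} ≤ ENNReal.ofReal (((j : ℝ) ^ 2)⁻¹ * (d : ℝ) ^ (-1000 : ℤ)))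
    (hconv : ∀ q, 1 ≤ q → q ≤ d → ∀ j, 1 ≤ j →
      μ {ω | ∑ i ∈ Finset.range q, Yh i ω = j}
        ≤ ENNReal.ofReal (2 * (q : ℝ) * ((j : ℝ) ^ 2)⁻¹ * (d : ℝ) ^ (-1000 : ℤ)))
    (q : ℕ) (hq1 : 1 ≤ q) (hqd : q ≤ d) (j : ℕ) (hj : 2 ≤ j) :
    μ {ω | 2 ≤ ((Finset.range q).filter (fun i => 1 ≤ Yh i ω)).card ∧
           ∑ i ∈ Finset.range q, Yh i ω = j}
      ≤ ENNReal.ofReal (8 * (q : ℝ) ^ 2 * ((j : ℝ) ^ 2)⁻¹ * (d : ℝ) ^ (-2000 : ℤ)) := by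
  classical
  -- the event is contained in a union indexed by the largest index k with Yh k ≥ 1
  -- and the value j' = Yh k
  set E := {ω | 2 ≤ ((Finset.range q).filter (fun i => 1 ≤ Yh i ω)).card ∧
           ∑ i ∈ Finset.range q, Yh i ω = j} with hE
  have hsub : E ⊆ ⋃ k ∈ Finset.Ico 1 q, ⋃ j' ∈ Finset.Ico 1 j,
      {ω | Yh k ω = j' ∧ ∑ i ∈ Finset.range k, Yh i ω = j - j'} := by
    intro ω hω
    obtain ⟨hcard, hsum⟩ := hω
    set F := (Finset.range q).filter (fun i => 1 ≤ Yh i ω) with hF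
    have hFne : F.Nonempty := Finset.card_pos.mp (by omega)
    set k := F.max' hFne with hk
    have hkF : k ∈ F := F.max'_mem hFne
    obtain ⟨m, hmF, hmk⟩ := Finset.exists_mem_ne (s := F) (by omega) k
    have hmlt : m < k := lt_of_le_of_ne (F.le_max' m hmF) hmk
    have hkq : k < q := by
      have := Finset.mem_filter.mp hkF
      exact Finset.mem_range.mp this.1
    have hYk : 1 ≤ Yh k ω := (Finset.mem_filter.mp hkF).2
    have hYm : 1 ≤ Yh m ω := (Finset.mem_filter.mp hmF).2
    -- tail above k is zero
    have htail : ∀ i, k < i → i < q → Yh i ω = 0 := by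
      intro i hki hiq
      by_contra h
      have hiF : i ∈ F := Finset.mem_filter.mpr ⟨Finset.mem_range.mpr hiq, by omega⟩
      have := F.le_max' i hiF
      omega
    -- split the total sum
    have hsplit : ∑ i ∈ Finset.range q, Yh i ω
        = (∑ i ∈ Finset.range k, Yh i ω) + Yh k ω := by
      have h1 : Finset.range q = Finset.range (k+1) ∪ Finset.Ico (k+1) q := by
        rw [Finset.range_eq_Ico, Finset.range_eq_Ico]
        exact (Finset.Ico_union_Ico_eq_Ico (a := 0) (b := k+1) (c := q) (by omega) (by omega)).symm
      rw [h1, Finset.sum_union]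
      · rw [Finset.sum_range_succ]
        have : ∑ i ∈ Finset.Ico (k+1) q, Yh i ω = 0 := by
          refine Finset.sum_eq_zero ?_
          intro i hi
          simp only [Finset.mem_Ico] at hi
          exact htail i (by omega) hi.2
        omega
      · rw [Finset.range_eq_Ico]
        exact Finset.Ico_disjoint_Ico_consecutive 0 (k+1) q
    have hSk : 1 ≤ ∑ i ∈ Finset.range k, Yh i ω := by
      calc 1 ≤ Yh m ω := hYm
        _ ≤ ∑ i ∈ Finset.range k, Yh i ω :=
          Finset.single_le_sum (f := fun i => Yh i ω) (fun _ _ => Nat.zero_le _)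
            (Finset.mem_range.mpr hmlt)
    have hYkj : Yh k ω < j := by omega
    simp only [Set.mem_iUnion, Set.mem_setOf_eq]
    refine ⟨k, Finset.mem_Ico.mpr ⟨by omega, hkq⟩, Yh k ω,
      Finset.mem_Ico.mpr ⟨hYk, hYkj⟩, rfl, by omega⟩
  calc μ E ≤ μ (⋃ k ∈ Finset.Ico 1 q, ⋃ j' ∈ Finset.Ico 1 j,
      {ω | Yh k ω = j' ∧ ∑ i ∈ Finset.range k, Yh i ω = j - j'}) := measure_mono hsub
    _ ≤ ∑ k ∈ Finset.Ico 1 q, μ (⋃ j' ∈ Finset.Ico 1 j,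
        {ω | Yh k ω = j' ∧ ∑ i ∈ Finset.range k, Yh i ω = j - j'}) :=
      measure_biUnion_finset_le _ _
    _ ≤ ∑ k ∈ Finset.Ico 1 q, ∑ j' ∈ Finset.Ico 1 j,
        μ {ω | Yh k ω = j' ∧ ∑ i ∈ Finset.range k, Yh i ω = j - j'} :=
      Finset.sum_le_sum fun k _ => measure_biUnion_finset_le _ _
    _ ≤ ∑ k ∈ Finset.Ico 1 q, ∑ j' ∈ Finset.Ico 1 j,
        ENNReal.ofReal ((((j':ℝ))^2)⁻¹ * (d : ℝ) ^ (-1000 : ℤ)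
          * (2 * (k:ℝ) * ((((j - j' : ℕ):ℝ))^2)⁻¹ * (d : ℝ) ^ (-1000 : ℤ))) := by
        refine Finset.sum_le_sum fun k hk => Finset.sum_le_sum fun j' hj' => ?_
        simp only [Finset.mem_Ico] at hk hj'
        have hindepkS : IndepFun (∑ i ∈ Finset.range k, Yh i) (Yh k) μ :=
          hindep.indepFun_sum_range_succ hmeas k
        have hset : {ω | Yh k ω = j' ∧ ∑ i ∈ Finset.range k, Yh i ω = j - j'}
            = ((∑ i ∈ Finset.range k, Yh i) ⁻¹' {j - j'}) ∩ (Yh k ⁻¹' {j'}) := by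
          ext ω
          simp only [Set.mem_setOf_eq, Set.mem_inter_iff, Set.mem_preimage,
            Set.mem_singleton_iff, Finset.sum_apply]
          tauto
        rw [hset, hindepkS.measure_inter_preimage_eq_mul _ _ (measurableSet_singleton _)
          (measurableSet_singleton _)]
        have h1 : μ ((∑ i ∈ Finset.range k, Yh i) ⁻¹' {j - j'})
            ≤ ENNReal.ofReal (2 * (k:ℝ) * ((((j - j' : ℕ):ℝ))^2)⁻¹ * (d : ℝ) ^ (-1000 : ℤ)) := by
          have heq : (∑ i ∈ Finset.range k, Yh i) ⁻¹' {j - j'}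
              = {ω | ∑ i ∈ Finset.range k, Yh i ω = j - j'} := by
            ext ω
            simp [Finset.sum_apply]
          rw [heq]
          exact hconv k hk.1 (by omega) (j - j') (by omega)
        have h2 : μ (Yh k ⁻¹' {j'})
            ≤ ENNReal.ofReal ((((j':ℝ))^2)⁻¹ * (d : ℝ) ^ (-1000 : ℤ)) := by
          have heq : Yh k ⁻¹' {j'} = {ω | Yh k ω = j'} := rfl
          rw [heq]
          exact hone k j' hj'.1
        calc μ ((∑ i ∈ Finset.range k, Yh i) ⁻¹' {j - j'}) * μ (Yh k ⁻¹' {j'})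
            ≤ ENNReal.ofReal (2 * (k:ℝ) * ((((j - j' : ℕ):ℝ))^2)⁻¹ * (d : ℝ) ^ (-1000 : ℤ))
              * ENNReal.ofReal ((((j':ℝ))^2)⁻¹ * (d : ℝ) ^ (-1000 : ℤ)) :=
            mul_le_mul' h1 h2
          _ = ENNReal.ofReal ((((j':ℝ))^2)⁻¹ * (d : ℝ) ^ (-1000 : ℤ)
              * (2 * (k:ℝ) * ((((j - j' : ℕ):ℝ))^2)⁻¹ * (d : ℝ) ^ (-1000 : ℤ))) := by
            rw [← ENNReal.ofReal_mul (by positivity)]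
            ring_nf
    _ = ENNReal.ofReal (∑ k ∈ Finset.Ico 1 q, ∑ j' ∈ Finset.Ico 1 j,
        ((((j':ℝ))^2)⁻¹ * (d : ℝ) ^ (-1000 : ℤ)
          * (2 * (k:ℝ) * ((((j - j' : ℕ):ℝ))^2)⁻¹ * (d : ℝ) ^ (-1000 : ℤ)))) := by
        rw [ENNReal.ofReal_sum_of_nonneg]
        · refine Finset.sum_congr rfl fun k _ => ?_
          rw [ENNReal.ofReal_sum_of_nonneg]
          intro j' hj'
          positivity
        · intro k _
          positivity
    _ ≤ ENNReal.ofReal (8 * (q : ℝ) ^ 2 * ((j : ℝ) ^ 2)⁻¹ * (d : ℝ) ^ (-2000 : ℤ)) := by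
        refine ENNReal.ofReal_le_ofReal ?_
        have hd0 : ((d:ℝ)) ≠ 0 := by
          have : 0 < d := by omega
          positivity
        have hDD : (d : ℝ) ^ (-1000 : ℤ) * (d : ℝ) ^ (-1000 : ℤ) = (d : ℝ) ^ (-2000 : ℤ) := by
          rw [← zpow_add₀ hd0]
          norm_num
        have hD2 : (0:ℝ) ≤ (d : ℝ) ^ (-2000 : ℤ) := by positivity
        have hjinv : (0:ℝ) ≤ (((j:ℝ))^2)⁻¹ := by positivity
        have key : ∀ k : ℕ, ∑ j' ∈ Finset.Ico 1 j,
            ((((j':ℝ))^2)⁻¹ * (d : ℝ) ^ (-1000 : ℤ)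
              * (2 * (k:ℝ) * ((((j - j' : ℕ):ℝ))^2)⁻¹ * (d : ℝ) ^ (-1000 : ℤ)))
            = 2 * (k:ℝ) * (d : ℝ) ^ (-2000 : ℤ)
              * ∑ j' ∈ Finset.Ico 1 j, (((j':ℝ))^2)⁻¹ * ((((j - j' : ℕ):ℝ))^2)⁻¹ := by
          intro k
          rw [Finset.mul_sum]
          refine Finset.sum_congr rfl fun j' _ => ?_
          rw [← hDD]
          ring
        have hgauss : (∑ k ∈ Finset.Ico 1 q, (k:ℝ)) ≤ (q:ℝ)^2 / 2 := by
          have h1 : ∑ k ∈ Finset.Ico 1 q, k = ∑ k ∈ Finset.range q, k := by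
            rw [Finset.range_eq_Ico, ← Finset.sum_Ico_consecutive _ (Nat.zero_le 1) (by omega)]
            simp
          have h2 := Finset.sum_range_id_mul_two q
          have h3 : (∑ k ∈ Finset.Ico 1 q, k) * 2 ≤ q * q := by
            rw [h1, h2]
            exact Nat.mul_le_mul_left q (Nat.sub_le q 1)
          have h4 : ((∑ k ∈ Finset.Ico 1 q, k : ℕ):ℝ) * 2 ≤ (q:ℝ) * (q:ℝ) := by
            exact_mod_cast h3
          push_cast at h4
          nlinarith
        calc ∑ k ∈ Finset.Ico 1 q, ∑ j' ∈ Finset.Ico 1 j,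
            ((((j':ℝ))^2)⁻¹ * (d : ℝ) ^ (-1000 : ℤ)
              * (2 * (k:ℝ) * ((((j - j' : ℕ):ℝ))^2)⁻¹ * (d : ℝ) ^ (-1000 : ℤ)))
            = ∑ k ∈ Finset.Ico 1 q, (2 * (k:ℝ) * (d : ℝ) ^ (-2000 : ℤ)
              * ∑ j' ∈ Finset.Ico 1 j, (((j':ℝ))^2)⁻¹ * ((((j - j' : ℕ):ℝ))^2)⁻¹) :=
            Finset.sum_congr rfl fun k _ => key k
          _ ≤ ∑ k ∈ Finset.Ico 1 q,
              (2 * (k:ℝ) * (d : ℝ) ^ (-2000 : ℤ) * (8 * (((j:ℝ))^2)⁻¹)) := by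
            refine Finset.sum_le_sum fun k _ => ?_
            refine mul_le_mul_of_nonneg_left (conv_sum_le j (by omega)) ?_
            positivity
          _ = 16 * (d : ℝ) ^ (-2000 : ℤ) * (((j:ℝ))^2)⁻¹ * ∑ k ∈ Finset.Ico 1 q, (k:ℝ) := by
            rw [Finset.mul_sum]
            exact Finset.sum_congr rfl fun k _ => by ring
          _ ≤ 16 * (d : ℝ) ^ (-2000 : ℤ) * (((j:ℝ))^2)⁻¹ * ((q:ℝ)^2 / 2) := by
            refine mul_le_mul_of_nonneg_left hgauss ?_
            positivity
          _ = 8 * (q : ℝ) ^ 2 * (((j:ℝ)) ^ 2)⁻¹ * (d : ℝ) ^ (-2000 : ℤ) := by ring
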